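/- arXiv:1407.6237 — 3 statements merged into one kernel-verified Lean document; each statement's English description precedes it below -/
import Mathlib

section
/- Let ω, ε, μd, μ0, σd, σ0 ∈ ℂ with ω ≠ 0, μd ≠ 0, μ0 ≠ 0. Let Ek, Hk, El0, Hl0 : ℝ³ → ℂ³ be fields differentiable at a point x and satisfying at x the time-harmonic Maxwell relations curl Ek = i·ω·μd · Hk, curl Hk = (σd − i·ω·ε) · Ek, curl El0 = i·ω·μ0 · Hl0, curl Hl0 = (σ0 − i·ω·ε) · El0. Then at x one has div(El0 × Hk − Ek × Hl0) = ((μ0 − μd)/(i·ω·μd·μ0)) · (curl Ek · curl El0) + (σ0 − σd) · (Ek · El0). -/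
/-- Partial derivative in direction `i` of a field `ℝ³ → ℂ³`. -/
noncomputable def pdC (i : Fin 3) (F : (Fin 3 → ℝ) → (Fin 3 → ℂ)) (x : Fin 3 → ℝ) :
    Fin 3 → ℂ :=
  fderiv ℝ F x (Pi.single i 1)

/-- Curl of a field `ℝ³ → ℂ³`. -/
noncomputable def curlC (F : (Fin 3 → ℝ) → (Fin 3 → ℂ)) (x : Fin 3 → ℝ) : Fin 3 → ℂ :=
  ![pdC 1 F x 2 - pdC 2 F x 1,
    pdC 2 F x 0 - pdC 0 F x 2,
    pdC 0 F x 1 - pdC 1 F x 0]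

/-- Divergence of a field `ℝ³ → ℂ³`. -/
noncomputable def divC (F : (Fin 3 → ℝ) → (Fin 3 → ℂ)) (x : Fin 3 → ℝ) : ℂ :=
  ∑ i : Fin 3, pdC i F x i

/-- Bilinear dot product on `ℂ³` (no conjugation). -/
noncomputable def dotC (u v : Fin 3 → ℂ) : ℂ := ∑ i : Fin 3, u i * v i

/-- Cross product on `ℂ³`. -/
noncomputable def crossC (u v : Fin 3 → ℂ) : Fin 3 → ℂ :=
  ![u 1 * v 2 - u 2 * v 1, u 2 * v 0 - u 0 * v 2, u 0 * v 1 - u 1 * v 0]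

/- Expanding `div (A × B)` by the product rule gives `B · curl A − A · curl B`; substituting the
four Maxwell relations, the `ε`-terms cancel and `Hk · curl El0 − Hl0 · curl Ek` becomes a
multiple of `curl Ek · curl El0`. -/

section

variable {F A B : (Fin 3 → ℝ) → (Fin 3 → ℂ)} {x : Fin 3 → ℝ}

theorem pdC_apply (hF : DifferentiableAt ℝ F x) (i j : Fin 3) :
    pdC i F x j = fderiv ℝ (fun y => F y j) x (Pi.single i 1) := by
  rw [pdC, fderiv_pi (differentiableAt_pi.mp hF)]
  rfl

theorem DifferentiableAt.crossC (hA : DifferentiableAt ℝ A x) (hB : DifferentiableAt ℝ B x) :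
    DifferentiableAt ℝ (fun y => crossC (A y) (B y)) x := by
  have hAj := differentiableAt_pi.mp hA
  have hBj := differentiableAt_pi.mp hB
  refine differentiableAt_pi.mpr fun j => ?_
  fin_cases j <;> exact ((hAj _).mul (hBj _)).sub ((hAj _).mul (hBj _))

theorem pdC_crossC (hA : DifferentiableAt ℝ A x) (hB : DifferentiableAt ℝ B x) (i : Fin 3) :
    pdC i (fun y => crossC (A y) (B y)) x = crossC (pdC i A x) (B x) + crossC (A x) (pdC i B x) := by
  have hAj := differentiableAt_pi.mp hA
  have hBj := differentiableAt_pi.mp hB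
  ext j
  rw [pdC_apply (hA.crossC hB)]
  fin_cases j <;>
    simp only [crossC, Fin.isValue, Fin.zero_eta, Fin.mk_one, Fin.reduceFinMk, Matrix.cons_val_zero,
      Matrix.cons_val_one, Matrix.cons_val, hAj, hBj, DifferentiableAt.fun_mul, fderiv_fun_sub,
      fderiv_fun_mul, sub_apply, add_apply, smul_apply, smul_eq_mul, pdC_apply hA, pdC_apply hB,
      Pi.add_apply] <;>
    ring

theorem divC_sub (hA : DifferentiableAt ℝ A x) (hB : DifferentiableAt ℝ B x) :
    divC (fun y => A y - B y) x = divC A x - divC B x := by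
  simp only [divC, pdC, fderiv_fun_sub hA hB, sub_apply, Pi.sub_apply,
    Finset.sum_sub_distrib]

theorem divC_crossC (hA : DifferentiableAt ℝ A x) (hB : DifferentiableAt ℝ B x) :
    divC (fun y => crossC (A y) (B y)) x = dotC (B x) (curlC A x) - dotC (A x) (curlC B x) := by
  simp only [divC, pdC_crossC hA hB, Pi.add_apply]
  simp only [dotC, curlC, crossC, Fin.sum_univ_three, Fin.isValue, Matrix.cons_val_zero,
    Matrix.cons_val_one, Matrix.cons_val]
  ring

end

/-- The pointwise divergence identity behind the impedance measurement formula
`ΔZ_{kl}`: for time-harmonic Maxwell fields,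
`div(El0 × Hk − Ek × Hl0) = ((μ0 − μd)/(iωμdμ0))·(curl Ek · curl El0)
  + (σ0 − σd)·(Ek · El0)` at `x`. -/
theorem divergence_identity_impedance
    (ω ε μd μ0 σd σ0 : ℂ) (hω : ω ≠ 0) (hμd : μd ≠ 0) (hμ0 : μ0 ≠ 0)
    (Ek Hk El0 Hl0 : (Fin 3 → ℝ) → (Fin 3 → ℂ)) (x : Fin 3 → ℝ)
    (hEk : DifferentiableAt ℝ Ek x) (hHk : DifferentiableAt ℝ Hk x)
    (hEl0 : DifferentiableAt ℝ El0 x) (hHl0 : DifferentiableAt ℝ Hl0 x)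
    (hMF_k : ∀ i, curlC Ek x i = Complex.I * ω * μd * Hk x i)
    (hMA_k : ∀ i, curlC Hk x i = (σd - Complex.I * ω * ε) * Ek x i)
    (hMF_l : ∀ i, curlC El0 x i = Complex.I * ω * μ0 * Hl0 x i)
    (hMA_l : ∀ i, curlC Hl0 x i = (σ0 - Complex.I * ω * ε) * El0 x i) :
    divC (fun y => crossC (El0 y) (Hk y) - crossC (Ek y) (Hl0 y)) x =
      ((μ0 - μd) / (Complex.I * ω * μd * μ0)) * dotC (curlC Ek x) (curlC El0 x)
        + (σ0 - σd) * dotC (Ek x) (El0 x) := by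
  rw [divC_sub (hEl0.crossC hHk) (hEk.crossC hHl0), divC_crossC hEl0 hHk,
    divC_crossC hEk hHl0]
  simp only [dotC, Fin.sum_univ_three, hMF_k, hMA_k, hMF_l, hMA_l]
  field_simp
  ring
end

section
/- Let A be a 3×3 real matrix and ν ∈ ℝ³ with ‖ν‖ = 1. Then the function s ↦ det(1 + s·A) · ‖((1 + s·A)⁻¹)ᵀ · ν‖ (defined for s in a neighborhood of 0, where 1 + s·A is invertible) has derivative trace(A) − ⟨A·ν, ν⟩ at s = 0. In particular, for A = Dθ(x) this derivative is the tangential divergence div_τ θ = div θ − ⟨Dθ(x)·ν, ν⟩ of θ at a surface point with unit normal ν; i.e. the derivative of the surface Jacobian w_s = j_s·‖DT_s⁻ᵀ ν‖ at s = 0 equals div_τ θ. -/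
/-!
At `s = 0` the matrix `1 + s • A` is the identity, so by the product rule the derivative is the sum
of the derivatives of the two factors. The determinant is `1 + s · trace A + O(s²)`. The inverse
`(1 + s • A)⁻¹` has derivative `-A`, so the vector `(1 + s • A)⁻ᵀ ν` leaves the unit vector `ν` with
velocity `-Aᵀ ν`, and its norm changes at rate `⟨-Aᵀ ν, ν⟩ = -⟨A ν, ν⟩`.
-/

open Matrix

/-- Euclidean norm on `ℝ³` (as `Fin 3 → ℝ`). -/
noncomputable def enorm3 (v : Fin 3 → ℝ) : ℝ := Real.sqrt (∑ i : Fin 3, v i ^ 2)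

theorem hasDerivAt_ringInverse_one_add_smul {R : Type*} [NormedRing R] [NormedAlgebra ℝ R]
    [HasSummableGeomSeries R] (a : R) :
    HasDerivAt (fun s : ℝ => Ring.inverse (1 + s • a)) (-a) 0 :=
  ((hasFDerivAt_ringInverse (1 : Rˣ)).comp_hasDerivAt_of_eq (0 : ℝ)
    (((hasDerivAt_id' 0).smul_const a).const_add 1) (by simp)).congr_deriv (by simp)

section

variable {n : Type*} [Fintype n]

theorem HasDerivAt.dotProduct {u v : ℝ → n → ℝ} {u' v' : n → ℝ} {x : ℝ}
    (hu : HasDerivAt u u' x) (hv : HasDerivAt v v' x) :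
    HasDerivAt (fun s => u s ⬝ᵥ v s) (u' ⬝ᵥ v x + u x ⬝ᵥ v') x :=
  (HasDerivAt.fun_sum fun i _ =>
    (hasDerivAt_pi.1 hu i).mul (hasDerivAt_pi.1 hv i)).congr_deriv Finset.sum_add_distrib

variable [DecidableEq n]

theorem Matrix.hasDerivAt_det_one_add_smul (A : Matrix n n ℝ) :
    HasDerivAt (fun s : ℝ => (1 + s • A).det) A.trace 0 := by
  set p := (det (1 + (Polynomial.X : Polynomial ℝ) • A.map Polynomial.C)).divX.divX
  have h : (fun s : ℝ => (1 + s • A).det) = fun s => 1 + A.trace * s + p.eval s * s ^ 2 :=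
    funext fun s => det_one_add_smul s A
  rw [h]
  refine ((((hasDerivAt_id' (0 : ℝ)).const_mul A.trace).const_add 1).fun_add
    ((p.hasDerivAt 0).fun_mul (hasDerivAt_pow 2 (0 : ℝ)))).congr_deriv ?_
  simp

open scoped Norms.Operator in
theorem Matrix.hasDerivAt_transpose_inv_one_add_smul_mulVec (A : Matrix n n ℝ) (v : n → ℝ) :
    HasDerivAt (fun s : ℝ => ((1 + s • A)⁻¹)ᵀ *ᵥ v) (-(Aᵀ *ᵥ v)) 0 := by
  have := (vecMulBilin ℝ ℝ v).toContinuousLinearMap.hasFDerivAt.comp_hasDerivAt (0 : ℝ)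
    (hasDerivAt_ringInverse_one_add_smul A)
  simp only [mulVec_transpose, nonsing_inv_eq_ringInverse]
  exact this.congr_deriv (vecMul_neg v A)

end

theorem enorm3_eq_sqrt_dotProduct (v : Fin 3 → ℝ) : enorm3 v = √(v ⬝ᵥ v) := by
  simp [enorm3, dotProduct, sq]

theorem HasDerivAt.enorm3 {u : ℝ → Fin 3 → ℝ} {u' : Fin 3 → ℝ} {x : ℝ}
    (hu : HasDerivAt u u' x) (h0 : u x ≠ 0) :
    HasDerivAt (fun s => enorm3 (u s)) ((u' ⬝ᵥ u x) / enorm3 (u x)) x := by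
  simp only [enorm3_eq_sqrt_dotProduct]
  refine ((hu.dotProduct hu).sqrt (dotProduct_self_eq_zero.not.2 h0)).congr_deriv ?_
  rw [dotProduct_comm (u x) u']
  ring

/-- The derivative at `s = 0` of the surface Jacobian
`w_s = det(1 + s·A) · ‖((1 + s·A)⁻¹)ᵀ ν‖` (for a unit vector `ν`) is the
tangential divergence `trace A − ⟨A ν, ν⟩`. -/
theorem deriv_surface_jacobian (A : Matrix (Fin 3) (Fin 3) ℝ) (ν : Fin 3 → ℝ)
    (hν : enorm3 ν = 1) :
    HasDerivAt
      (fun s : ℝ => (1 + s • A).det * enorm3 ((((1 + s • A)⁻¹)ᵀ) *ᵥ ν))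
      (A.trace - (A *ᵥ ν) ⬝ᵥ ν) 0 := by
  have hν0 : ν ≠ 0 := by rintro rfl; simp [enorm3] at hν
  have hstart : ((1 + (0 : ℝ) • A)⁻¹)ᵀ *ᵥ ν = ν := by simp
  have hnormal := (hasDerivAt_transpose_inv_one_add_smul_mulVec A ν).enorm3 (by rwa [hstart])
  refine ((hasDerivAt_det_one_add_smul A).mul hnormal).congr_deriv ?_
  rw [hstart, hν, zero_smul, add_zero, det_one, neg_dotProduct, mulVec_transpose,
    ← dotProduct_mulVec, dotProduct_comm ν]
  ring
end

section
/- Let A be a 3×3 real matrix. Then the matrix-valued function s ↦ (det(1 + s·A))⁻¹ · ((1 + s·A)ᵀ · (1 + s·A)) (defined for s in a neighborhood of 0) has derivative A + Aᵀ − trace(A)·1 at s = 0, where the derivative is taken entrywise. In particular, for A = Dθ(x), the derivative at s = 0 of DT_sᵀDT_s / j_s for T_s = id + s·θ equals −div(θ)·1 + Dθ + Dθᵀ. -/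
/-!
Product rule at `s = 0`, where `det (1 + s • A) = 1` and `(1 + s • A)ᵀ (1 + s • A) = 1`:
the determinant has derivative `trace A` (the linear coefficient of the polynomial
`det (1 + X • A)`), and the Gram matrix has derivative `A + Aᵀ`.
-/

open Matrix Polynomial

namespace Matrix

variable {𝕜 : Type*} [NontriviallyNormedField 𝕜] {n : Type*} [DecidableEq n]

theorem hasDerivAt_det_one_add_smul_s11 [Fintype n] (A : Matrix n n 𝕜) :
    HasDerivAt (fun s : 𝕜 => (1 + s • A).det) A.trace 0 := by
  have h := (det (1 + (X : 𝕜[X]) • A.map C)).hasDerivAt 0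
  rw [derivative_det_one_add_X_smul] at h
  convert h using 1
  ext s
  simp [eval_det, ← smul_eq_mul_diagonal]

theorem hasDerivAt_one_add_smul_apply (A : Matrix n n 𝕜) (i j : n) :
    HasDerivAt (fun s : 𝕜 => (1 + s • A) i j) (A i j) 0 := by
  simpa using ((hasDerivAt_id (0 : 𝕜)).mul_const (A i j)).const_add ((1 : Matrix n n 𝕜) i j)

theorem hasDerivAt_transpose_mul_self_one_add_smul_apply [Fintype n] (A : Matrix n n 𝕜)
    (i j : n) :
    HasDerivAt (fun s : 𝕜 => ((1 + s • A)ᵀ * (1 + s • A) : Matrix n n 𝕜) i j) ((A + Aᵀ) i j)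
      0 := by
  have h := HasDerivAt.fun_sum (u := Finset.univ) fun k _ =>
    (hasDerivAt_one_add_smul_apply A k i).fun_mul (hasDerivAt_one_add_smul_apply A k j)
  simp only [zero_smul, add_zero] at h
  refine h.congr_deriv ?_
  simp [one_apply, Finset.sum_add_distrib, add_comm]

theorem hasDerivAt_inv_det_mul_transpose_mul_self_one_add_smul_apply [Fintype n]
    (A : Matrix n n 𝕜) (i j : n) :
    HasDerivAt
      (fun s : 𝕜 => ((1 + s • A).det)⁻¹ * ((1 + s • A)ᵀ * (1 + s • A) : Matrix n n 𝕜) i j)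
      ((A + Aᵀ - A.trace • (1 : Matrix n n 𝕜)) i j) 0 := by
  have h := ((hasDerivAt_det_one_add_smul_s11 A).fun_inv (by simp)).fun_mul
    (hasDerivAt_transpose_mul_self_one_add_smul_apply A i j)
  refine h.congr_deriv ?_
  simp [sub_eq_add_neg, add_comm]

end Matrix

/-- Entrywise derivative at `s = 0` of
`s ↦ (det(1 + s·A))⁻¹ · ((1 + s·A)ᵀ (1 + s·A))` is `A + Aᵀ − (trace A)·1`;
this is the derivative of `DT_sᵀ DT_s / j_s` for `T_s = id + s·θ`, `A = Dθ(x)`. -/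
theorem deriv_metric_jacobian (A : Matrix (Fin 3) (Fin 3) ℝ) :
    ∀ i j : Fin 3,
      HasDerivAt
        (fun s : ℝ => ((1 + s • A).det)⁻¹ *
          (((1 + s • A)ᵀ * (1 + s • A) : Matrix (Fin 3) (Fin 3) ℝ) i j))
        ((A + Aᵀ - A.trace • (1 : Matrix (Fin 3) (Fin 3) ℝ)) i j) 0 :=
  A.hasDerivAt_inv_det_mul_transpose_mul_self_one_add_smul_apply
end
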